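/- If y and z are almost even binary strings, then the string b·y·z (the letter b followed by y followed by z) is almost even. -/
import Mathlib


inductive Letter : Type
  | a | b
deriving DecidableEq

open Letter

def alpha (x : List Letter) : ℕ := x.count Letter.a
def beta (x : List Letter) : ℕ := x.count Letter.b

/-- x is "almost even": nonempty, α(x) = β(x)+1, and every proper prefix u has α(u) ≤ β(u). -/
def AE (x : List Letter) : Prop :=
  x ≠ [] ∧ alpha x = beta x + 1 ∧ ∀ u : List Letter, u <+: x → u ≠ x → alpha u ≤ beta u

theorem stmt4 (y z : List Letter) (hy : AE y) (hz : AE z) :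
    AE (Letter.b :: (y ++ z)) := by
  obtain ⟨hy0, hy1, hy2⟩ := hy
  obtain ⟨hz0, hz1, hz2⟩ := hz
  refine ⟨by simp, ?_, ?_⟩
  · simp [alpha, beta, List.count_append, List.count_cons] at *
    omega
  · intro u hu hne
    rcases u with _ | ⟨c, u⟩
    · simp [alpha, beta]
    · obtain ⟨hc, hu'⟩ := by simpa using (List.cons_prefix_cons.mp hu)
      subst hc
      clear hu
      have key : alpha u ≤ beta u + 1 := by
        rcases List.prefix_or_prefix_of_prefix hu' (y.prefix_append z) with h | h
        · rcases eq_or_ne u y with rfl | huy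
          · omega
          · have := hy2 u h huy; omega
        · obtain ⟨v, rfl⟩ := h
          have hv : v <+: z := (List.prefix_append_right_inj y).mp hu'
          rcases eq_or_ne v z with rfl | hvz
          · exact absurd rfl hne
          · have := hz2 v hv hvz
            simp only [alpha, beta, List.count_append] at *
            omega
      have h1 : alpha (Letter.b :: u) = alpha u := by simp [alpha]
      have h2 : beta (Letter.b :: u) = beta u + 1 := by simp [beta]
      omega
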